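/- arXiv:2102.08903 — 2 statements merged into one kernel-verified Lean document; each statement's English description precedes it below -/
import Mathlib

section
/- (NPG regret lemma for zero-sum games.) Fix π1, assume log π_θ(b|s) is β-smooth in θ for each (s,b), and run updates θ^{t+1} = θ^t − η w^t with ‖w^t‖ ≤ W. Let π2^* be the best response to π1 and define err_t = E_{s∼d_σ^{π1,π2^*}} E_{a∼π1} E_{b∼π2^*} [ A^{π1,π2^t}(s,a,b) − (w^t)^⊤ ∇_θ log π2^t(b|s) ]. Then (1/T) Σ_{t=0}^{T−1} ( V^{π1,π2^t}(σ) − V^{π1,π2^*}(σ) ) ≤ (1/(1−γ)) ( log|A| / (ηT) + η β W² / 2 − (1/T) Σ_{t=0}^{T−1} err_t ). -/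
/-!
The potential `Φ t = E_{s ∼ d*, b ∼ π2*} log π_{θ^t}(b|s)`, which is `-KL(π2* ‖ π2^t)` up to a
term independent of `t`, drives the argument. β-smoothness of `log π_θ` bounds the
increase of `Φ` along the step `θ ↦ θ - η w` from below by the linear term
`-η E ⟨w^t, ∇ log π2^t⟩` minus `η² β W² / 2`, and the definition of `err_t` together with the
performance difference identity turns that linear term into `η ((1 - γ)(V_t - V*) + err_t)`.
Summing over `t` telescopes to `Φ T - Φ 0 ≤ log |A|`, since `Φ 0 = -log |A|` for the uniform
initial policy and `Φ T ≤ 0` because probabilities are at most one.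
-/

open Finset
open scoped NNReal RealInnerProductSpace

theorem LipschitzWith.add_inner_gradient_sub_le {E : Type*} [NormedAddCommGroup E]
    [InnerProductSpace ℝ E] [CompleteSpace E] {f : E → ℝ} {K : ℝ≥0} (hf : Differentiable ℝ f)
    (hK : LipschitzWith K (gradient f)) (x u : E) :
    f x + ⟪gradient f x, u⟫ - K / 2 * ‖u‖ ^ 2 ≤ f (x + u) := by
  set g : ℝ → ℝ := fun t => f (x + t • u) - t * ⟪gradient f x, u⟫ + K / 2 * t ^ 2 * ‖u‖ ^ 2
  have hg : ∀ t, HasDerivAt g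
      (⟪gradient f (x + t • u), u⟫ - ⟪gradient f x, u⟫ + K * t * ‖u‖ ^ 2) t := by
    intro t
    have hline : HasDerivAt (fun t : ℝ => x + t • u) u t := by
      simpa using ((hasDerivAt_id t).smul_const u).const_add x
    have hcomp := (hf _).hasGradientAt.hasFDerivAt.comp_hasDerivAt t hline
    rw [InnerProductSpace.toDual_apply_apply] at hcomp
    have h := (hcomp.sub ((hasDerivAt_id t).mul_const ⟪gradient f x, u⟫)).add
      (((hasDerivAt_pow 2 t).const_mul (K / 2 : ℝ)).mul_const (‖u‖ ^ 2))
    exact h.congr_deriv (by push_cast; ring)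
  have hg' : ∀ t, 0 < t →
      0 ≤ ⟪gradient f (x + t • u), u⟫ - ⟪gradient f x, u⟫ + K * t * ‖u‖ ^ 2 := by
    intro t ht
    have hlip : ‖gradient f (x + t • u) - gradient f x‖ ≤ K * (t * ‖u‖) := by
      simpa [dist_eq_norm, norm_smul, abs_of_pos ht] using hK.dist_le_mul (x + t • u) x
    have hcs := neg_abs_le ⟪gradient f (x + t • u) - gradient f x, u⟫
    have := abs_real_inner_le_norm (gradient f (x + t • u) - gradient f x) u
    rw [inner_sub_left] at hcs this
    nlinarith [norm_nonneg u]
  have hmono : MonotoneOn g (Set.Ici 0) :=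
    monotoneOn_of_hasDerivWithinAt_nonneg (convex_Ici 0)
      (fun t _ => (hg t).continuousAt.continuousWithinAt)
      (fun t _ => (hg t).hasDerivWithinAt) (fun t ht => hg' t (by simpa using ht))
  have := hmono Set.self_mem_Ici (Set.mem_Ici.2 zero_le_one) zero_le_one
  simp only [g, zero_smul, add_zero, one_smul, zero_mul, sub_zero, one_mul, one_pow] at this
  linarith

theorem LipschitzWith.le_apply_sub_smul {E : Type*} [NormedAddCommGroup E]
    [InnerProductSpace ℝ E] [CompleteSpace E] {f : E → ℝ} {K : ℝ≥0} (hf : Differentiable ℝ f)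
    (hK : LipschitzWith K (gradient f)) (x w : E) {η W : ℝ} (hw : ‖w‖ ≤ W) :
    f x - η * ⟪w, gradient f x⟫ - η ^ 2 * (K * W ^ 2 / 2) ≤ f (x - η • w) := by
  have hdesc := hK.add_inner_gradient_sub_le hf x (-(η • w))
  rw [← sub_eq_add_neg, inner_neg_right, inner_smul_right, real_inner_comm, norm_neg, norm_smul,
    Real.norm_eq_abs, mul_pow, sq_abs] at hdesc
  have hW : ‖w‖ ^ 2 ≤ W ^ 2 := pow_le_pow_left₀ (norm_nonneg w) hw 2
  nlinarith [mul_le_mul_of_nonneg_left hW (mul_nonneg K.coe_nonneg (sq_nonneg η))]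

theorem mul_add_le_sum_mul_sum_of_le {S A : Type*} [Fintype S] [Fintype A] {d : S → ℝ}
    {p : S → A → ℝ} (hd0 : ∀ s, 0 ≤ d s) (hd1 : ∑ s, d s = 1) (hp0 : ∀ s b, 0 ≤ p s b)
    (hp1 : ∀ s, ∑ b, p s b = 1) {f g : S → A → ℝ} (a c : ℝ)
    (hfg : ∀ s b, a * f s b + c ≤ g s b) :
    a * ∑ s, d s * ∑ b, p s b * f s b + c ≤ ∑ s, d s * ∑ b, p s b * g s b := by
  have hconst : a * ∑ s, d s * ∑ b, p s b * f s b + c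
      = ∑ s, d s * ∑ b, p s b * (a * f s b + c) := by
    simp only [mul_add, sum_add_distrib, ← sum_mul, hp1, mul_left_comm _ a, ← mul_sum, hd1]
    ring
  rw [hconst]
  gcongr with s _ b _
  · exact hd0 s
  · exact hp0 s b
  · exact hfg s b

theorem sum_mul_sum_mul_log_nonpos {S A : Type*} [Fintype S] [Fintype A] {d : S → ℝ}
    {p q : S → A → ℝ} (hd0 : ∀ s, 0 ≤ d s) (hp0 : ∀ s b, 0 ≤ p s b) (hq0 : ∀ s b, 0 < q s b)
    (hq1 : ∀ s, ∑ b, q s b = 1) :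
    ∑ s, d s * ∑ b, p s b * Real.log (q s b) ≤ 0 := by
  refine sum_nonpos fun s _ => mul_nonpos_of_nonneg_of_nonpos (hd0 s) <|
    sum_nonpos fun b _ => mul_nonpos_of_nonneg_of_nonpos (hp0 s b) <|
      Real.log_nonpos (hq0 s b).le ?_
  exact hq1 s ▸ single_le_sum (fun b' _ => (hq0 s b').le) (mem_univ b)

theorem average_le_of_le_potential_increment {T : ℕ} (hT : 0 < T) {η κ B C : ℝ} (hη : 0 < η)
    (hκ : 0 < κ) (r e Φ : ℕ → ℝ)
    (hstep : ∀ t, η * (κ * r t + e t) - η ^ 2 * B ≤ Φ (t + 1) - Φ t) (hΦ : Φ T - Φ 0 ≤ C) :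
    (T : ℝ)⁻¹ * ∑ t ∈ range T, r t ≤
      κ⁻¹ * (C / (η * T) + η * B - (T : ℝ)⁻¹ * ∑ t ∈ range T, e t) := by
  have hT' : (0 : ℝ) < T := by exact_mod_cast hT
  have hsum : η * (κ * ∑ t ∈ range T, r t + ∑ t ∈ range T, e t) - T * (η ^ 2 * B) ≤ C := by
    calc _ = ∑ t ∈ range T, (η * (κ * r t + e t) - η ^ 2 * B) := by
          simp only [sum_sub_distrib, ← mul_sum, sum_add_distrib, sum_const, card_range,
            nsmul_eq_mul]
          ring
      _ ≤ ∑ t ∈ range T, (Φ (t + 1) - Φ t) := sum_le_sum fun t _ => hstep t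
      _ = Φ T - Φ 0 := sum_range_sub Φ T
      _ ≤ C := hΦ
  rw [← sub_nonneg] at hsum ⊢
  have hgap : κ⁻¹ * (C / (η * T) + η * B - (T : ℝ)⁻¹ * ∑ t ∈ range T, e t)
      - (T : ℝ)⁻¹ * ∑ t ∈ range T, r t = (η * κ * T)⁻¹ *
        (C - (η * (κ * ∑ t ∈ range T, r t + ∑ t ∈ range T, e t) - T * (η ^ 2 * B))) := by
    field_simp
    ring
  rw [hgap]
  positivity

theorem stmt11_general {S A : Type*} [Fintype S] [Fintype A] {dp : ℕ}
    (γ β η W : ℝ) (hγ : γ ∈ Set.Ico (0 : ℝ) 1) (hβ : 0 ≤ β) (hη : 0 < η)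
    (π1 : S → A → ℝ) (hπ1 : ∀ s, (∀ a, 0 ≤ π1 s a) ∧ ∑ a, π1 s a = 1)
    (π : EuclideanSpace ℝ (Fin dp) → S → A → ℝ)
    (hπpos : ∀ θ s b, 0 < π θ s b) (hπsum : ∀ θ s, ∑ b, π θ s b = 1)
    (hdiff : ∀ s b, Differentiable ℝ fun θ => Real.log (π θ s b))
    (hsmooth : ∀ s b, LipschitzWith (Real.toNNReal β)
      fun θ => gradient (fun θ' => Real.log (π θ' s b)) θ)
    (T : ℕ) (hT : 0 < T)
    (θ : ℕ → EuclideanSpace ℝ (Fin dp)) (w : ℕ → EuclideanSpace ℝ (Fin dp))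
    (hupd : ∀ t, θ (t + 1) = θ t - η • w t)
    (hwB : ∀ t, ‖w t‖ ≤ W)
    (hunif : ∀ s b, π (θ 0) s b = (Fintype.card A : ℝ)⁻¹)
    (πstar : S → A → ℝ) (hπstar : ∀ s, (∀ b, 0 ≤ πstar s b) ∧ ∑ b, πstar s b = 1)
    (dstar : S → ℝ) (hdstar0 : ∀ s, 0 ≤ dstar s) (hdstar1 : ∑ s, dstar s = 1)
    (Vval : ℕ → ℝ) (Vstar : ℝ)
    (Adv : ℕ → S → A → A → ℝ)
    (hperf : ∀ t, (1 - γ) * (Vval t - Vstar) =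
      -∑ s, dstar s * ∑ a, π1 s a * ∑ b, πstar s b * Adv t s a b)
    (err : ℕ → ℝ)
    (herr : ∀ t, err t = ∑ s, dstar s * ∑ a, π1 s a * ∑ b, πstar s b *
      (Adv t s a b - (inner ℝ (w t) (gradient (fun θ' => Real.log (π θ' s b)) (θ t)) : ℝ))) :
    (T : ℝ)⁻¹ * ∑ t ∈ range T, (Vval t - Vstar) ≤
      (1 - γ)⁻¹ * (Real.log (Fintype.card A) / (η * T) + η * β * W ^ 2 / 2
        - (T : ℝ)⁻¹ * ∑ t ∈ range T, err t) := by
  set Φ : ℕ → ℝ := fun t => ∑ s, dstar s * ∑ b, πstar s b * Real.log (π (θ t) s b)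
  have hstep : ∀ t, η * ((1 - γ) * (Vval t - Vstar) + err t) - η ^ 2 * (β * W ^ 2 / 2)
      ≤ Φ (t + 1) - Φ t := by
    intro t
    have hlog : ∀ s b, -η * ⟪w t, gradient (fun θ' => Real.log (π θ' s b)) (θ t)⟫
        + -(η ^ 2 * (β * W ^ 2 / 2)) ≤ Real.log (π (θ (t + 1)) s b) - Real.log (π (θ t) s b) := by
      intro s b
      have := (hsmooth s b).le_apply_sub_smul (hdiff s b) (θ t) (w t) (η := η) (hwB t)
      rw [Real.coe_toNNReal β hβ, ← hupd] at this
      linarith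
    have hinner : ∑ s, dstar s * ∑ b, πstar s b *
        ⟪w t, gradient (fun θ' => Real.log (π θ' s b)) (θ t)⟫
        = -((1 - γ) * (Vval t - Vstar)) - err t := by
      have := herr t
      simp only [mul_sub, sum_sub_distrib, ← sum_mul, (hπ1 _).2, one_mul] at this
      linarith [hperf t]
    have := mul_add_le_sum_mul_sum_of_le hdstar0 hdstar1 (fun s => (hπstar s).1)
      (fun s => (hπstar s).2) _ _ hlog
    rw [hinner] at this
    simp only [Φ, mul_sub, sum_sub_distrib] at this ⊢
    linarith
  have hΦT : Φ T ≤ 0 := sum_mul_sum_mul_log_nonpos hdstar0 (fun s => (hπstar s).1)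
    (hπpos (θ T)) (hπsum (θ T))
  have hΦ0 : Φ 0 = -Real.log (Fintype.card A) := by
    simp only [Φ, hunif, Real.log_inv, ← sum_mul, (hπstar _).2, one_mul, hdstar1]
  calc _ ≤ _ := average_le_of_le_potential_increment (C := Real.log (Fintype.card A)) hT hη
        (sub_pos.2 hγ.2) (fun t => Vval t - Vstar) err Φ hstep (by linarith)
    _ = _ := by ring

/-- NPG regret lemma for two-player zero-sum Markov games. -/
theorem stmt11 {S A : Type*} [Fintype S] [Fintype A] [Nonempty S] [Nonempty A] {dp : ℕ}
    (γ β η W : ℝ) (hγ : γ ∈ Set.Ico (0 : ℝ) 1) (hβ : 0 ≤ β) (hη : 0 < η) (hW : 0 ≤ W)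
    (π1 : S → A → ℝ) (hπ1 : ∀ s, (∀ a, 0 ≤ π1 s a) ∧ ∑ a, π1 s a = 1)
    (π : EuclideanSpace ℝ (Fin dp) → S → A → ℝ)
    (hπpos : ∀ θ s b, 0 < π θ s b) (hπsum : ∀ θ s, ∑ b, π θ s b = 1)
    (hdiff : ∀ s b, Differentiable ℝ fun θ => Real.log (π θ s b))
    (hsmooth : ∀ s b, LipschitzWith (Real.toNNReal β)
      fun θ => gradient (fun θ' => Real.log (π θ' s b)) θ)
    (T : ℕ) (hT : 0 < T)
    (θ : ℕ → EuclideanSpace ℝ (Fin dp)) (w : ℕ → EuclideanSpace ℝ (Fin dp))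
    (hθ0 : θ 0 = 0) (hupd : ∀ t, θ (t + 1) = θ t - η • w t)
    (hwB : ∀ t, ‖w t‖ ≤ W)
    (hunif : ∀ s b, π (θ 0) s b = (Fintype.card A : ℝ)⁻¹)
    (πstar : S → A → ℝ) (hπstar : ∀ s, (∀ b, 0 ≤ πstar s b) ∧ ∑ b, πstar s b = 1)
    (dstar : S → ℝ) (hdstar0 : ∀ s, 0 ≤ dstar s) (hdstar1 : ∑ s, dstar s = 1)
    (Vval : ℕ → ℝ) (Vstar : ℝ)
    (Adv : ℕ → S → A → A → ℝ)
    (hperf : ∀ t, (1 - γ) * (Vval t - Vstar) =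
      -∑ s, dstar s * ∑ a, π1 s a * ∑ b, πstar s b * Adv t s a b)
    (err : ℕ → ℝ)
    (herr : ∀ t, err t = ∑ s, dstar s * ∑ a, π1 s a * ∑ b, πstar s b *
      (Adv t s a b - (inner ℝ (w t) (gradient (fun θ' => Real.log (π θ' s b)) (θ t)) : ℝ))) :
    (T : ℝ)⁻¹ * ∑ t ∈ range T, (Vval t - Vstar) ≤
      (1 - γ)⁻¹ * (Real.log (Fintype.card A) / (η * T) + η * β * W ^ 2 / 2
        - (T : ℝ)⁻¹ * ∑ t ∈ range T, err t) :=
  stmt11_general γ β η W hγ hβ hη π1 hπ1 π hπpos hπsum hdiff hsmooth T hT θ w hupd hwB hunif πstar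
    hπstar dstar hdstar0 hdstar1 Vval Vstar Adv hperf err herr
end

section
/- (Entropy-regularized performance improvement.) Fix π1 and τ > 0, and consider the entropy-regularized NPG update π2^{t+1}(b|s) ∝ (π2^t(b|s))^{1−ητ/(1−γ)} exp(−(η/(1−γ)) Σ_a π1(a|s) Q_τ^{π1,π2^t}(s,a,b)) with 0 < ητ/(1−γ) ≤ 1. Then for every initial state s_0: V_τ^{t}(s_0) = V_τ^{t+1}(s_0) + E_{s∼d^{t+1}_{s_0}} [ (1/η − τ/(1−γ)) KL(π2^{t+1}(·|s) ‖ π2^t(·|s)) + (1/η) KL(π2^t(·|s) ‖ π2^{t+1}(·|s)) ]. In particular, V_τ^{t+1}(s_0) ≤ V_τ^t(s_0), i.e. the regularized value of the min-player monotonically decreases. -/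
/-!
Write `f = V^{t+1} - V^t` and let `T'` be the regularized Bellman operator of `(π₁, π₂^{t+1})`,
which is affine with linear part `γ K` for the state kernel `K` of that policy pair. Since
`V^{t+1} = T' V^{t+1}`, we get `f = g + γ K f` with the one-step advantage `g = T' V^t - V^t`, and
pairing with the discounted visitation `d = (1 - γ) δ_{s₀} + γ d K` telescopes this to
`(1 - γ) f(s₀) = ⟪d, g⟫` (performance difference). Taking logarithms in the multiplicative update
expresses the averaged `Q`-values through `log π₂^t`, `log π₂^{t+1}` and the normaliser, which
makes `g(s)` exactly `-(1 - γ)` times the stated combination of KL divergences. Its coefficients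
are nonnegative by the step-size condition, and `d ≥ 0`, whence monotonicity.
-/

open Finset Matrix Real

section KL

variable {A : Type*} [Fintype A]

noncomputable def klDivergence (p q : A → ℝ) : ℝ := ∑ b, p b * log (p b / q b)

theorem klDivergence_nonneg {p q : A → ℝ} (hp : ∀ b, 0 < p b) (hq : ∀ b, 0 < q b)
    (hsum : ∑ b, q b ≤ ∑ b, p b) : 0 ≤ klDivergence p q := by
  have hterm : ∀ b, p b - q b ≤ p b * log (p b / q b) := fun b => by
    have := mul_le_mul_of_nonneg_left (one_sub_inv_le_log_of_pos (div_pos (hp b) (hq b)))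
      (hp b).le
    rwa [inv_div, mul_sub, mul_one, mul_div_cancel₀ _ (hp b).ne'] at this
  calc (0 : ℝ) ≤ ∑ b, (p b - q b) := by rw [sum_sub_distrib]; linarith
    _ ≤ klDivergence p q := sum_le_sum fun b _ => hterm b

theorem npg_step_sub {p p' q : A → ℝ} {c τ Z : ℝ} (hc : c ≠ 0) (hp : ∀ b, 0 < p b)
    (hp₁ : ∑ b, p b = 1) (hp' : ∀ b, 0 < p' b) (hp'₁ : ∑ b, p' b = 1) (hZ : 0 < Z)
    (hupd : ∀ b, p' b = p b ^ (1 - c * τ) * exp (-c * q b) / Z) :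
    ∑ b, p' b * (q b + τ * log (p' b)) - ∑ b, p b * (q b + τ * log (p b))
      = -((1 / c - τ) * klDivergence p' p + 1 / c * klDivergence p p') := by
  have hlog : ∀ b, log (p' b) = (1 - c * τ) * log (p b) - c * q b - log Z := fun b => by
    have hpow := (rpow_pos_of_pos (hp b) (1 - c * τ)).ne'
    rw [hupd, log_div (mul_ne_zero hpow (exp_ne_zero _)) hZ.ne', log_mul hpow (exp_ne_zero _),
      log_rpow (hp b), log_exp]
    ring
  -- the normaliser contributes `log Z / c * (∑ p - ∑ p') = 0`
  have hterm : ∀ b, p' b * (q b + τ * log (p' b)) - p b * (q b + τ * log (p b))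
      = -((1 / c - τ) * (p' b * log (p' b / p b)) + 1 / c * (p b * log (p b / p' b)))
        + log Z / c * (p b - p' b) := fun b => by
    have hq : q b = ((1 - c * τ) * log (p b) - log (p' b) - log Z) / c := by
      rw [hlog]; field_simp; ring
    rw [hq, log_div (hp' b).ne' (hp b).ne', log_div (hp b).ne' (hp' b).ne']
    field_simp
    ring
  rw [← sum_sub_distrib, sum_congr rfl fun b _ => hterm b, sum_add_distrib, sum_neg_distrib,
    sum_add_distrib, ← mul_sum, ← mul_sum, ← mul_sum, sum_sub_distrib, hp₁, hp'₁, sub_self,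
    mul_zero, add_zero]
  rfl

end KL

section Visitation

variable {S : Type*} [Fintype S]

/-- The negative part `m = min d 0` satisfies `γ m K ≤ m`; summing over states, `K` being
stochastic, gives `γ ∑ m ≤ ∑ m`, so `∑ m = 0`. -/
theorem nonneg_of_eq_add_smul_vecMul {K : Matrix S S ℝ} (hK₀ : ∀ s s', 0 ≤ K s s')
    (hK₁ : ∀ s, ∑ s', K s s' = 1) {γ : ℝ} (hγ₀ : 0 ≤ γ) (hγ₁ : γ < 1) {c d : S → ℝ}
    (hc : 0 ≤ c) (hd : d = c + γ • d ᵥ* K) : 0 ≤ d := by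
  set m : S → ℝ := fun s => min (d s) 0
  have hm : ∀ s', γ * ∑ s, m s * K s s' ≤ m s' := fun s' => by
    have hle : γ * ∑ s, m s * K s s' ≤ γ * ∑ s, d s * K s s' :=
      mul_le_mul_of_nonneg_left
        (sum_le_sum fun s _ => mul_le_mul_of_nonneg_right (min_le_left _ _) (hK₀ s s')) hγ₀
    have hnp : ∑ s, m s * K s s' ≤ 0 :=
      sum_nonpos fun s _ => mul_nonpos_of_nonpos_of_nonneg (min_le_right _ _) (hK₀ s s')
    have hds : γ * ∑ s, d s * K s s' ≤ d s' := by
      rw [congrFun hd s']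
      exact le_add_of_nonneg_left (hc s')
    exact le_min (hle.trans hds) (mul_nonpos_of_nonneg_of_nonpos hγ₀ hnp)
  have hsum : γ * ∑ s', m s' ≤ ∑ s', m s' :=
    calc γ * ∑ s', m s' = ∑ s', γ * ∑ s, m s * K s s' := by
          rw [← mul_sum, sum_comm]
          simp only [← mul_sum, hK₁, mul_one]
      _ ≤ ∑ s', m s' := sum_le_sum fun s' _ => hm s'
  have hm₀ : ∑ s', m s' = 0 := by
    refine le_antisymm (sum_nonpos fun s _ => min_le_right _ _) ?_
    have : 0 ≤ (1 - γ) * ∑ s', m s' := by linarith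
    exact (mul_nonneg_iff_of_pos_left (sub_pos.2 hγ₁)).1 this
  intro s
  simpa [m] using (sum_eq_zero_iff_of_nonpos fun s _ => min_le_right (d s) 0).1 hm₀ s (mem_univ s)

variable [DecidableEq S]

def IsDiscountedVisitation (K : Matrix S S ℝ) (γ : ℝ) (s₀ : S) (d : S → ℝ) : Prop :=
  d = (1 - γ) • Pi.single s₀ 1 + γ • d ᵥ* K

theorem IsDiscountedVisitation.dotProduct_eq {K : Matrix S S ℝ} {γ : ℝ} {s₀ : S} {d : S → ℝ}
    (hd : IsDiscountedVisitation K γ s₀ d) {f g : S → ℝ} (hf : f = g + γ • K *ᵥ f) :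
    d ⬝ᵥ g = (1 - γ) * f s₀ := by
  have hg : g = f - γ • K *ᵥ f := eq_sub_of_add_eq hf.symm
  have hdK : γ • d ᵥ* K = d - (1 - γ) • Pi.single s₀ 1 := eq_sub_of_add_eq' hd.symm
  calc d ⬝ᵥ g = d ⬝ᵥ f - (γ • d ᵥ* K) ⬝ᵥ f := by
        rw [hg, dotProduct_sub, dotProduct_smul, dotProduct_mulVec, smul_dotProduct]
    _ = (1 - γ) * f s₀ := by
        rw [hdK, sub_dotProduct, smul_dotProduct, single_dotProduct, smul_eq_mul]
        ring

theorem IsDiscountedVisitation.nonneg {K : Matrix S S ℝ} {γ : ℝ} {s₀ : S} {d : S → ℝ}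
    (hd : IsDiscountedVisitation K γ s₀ d) (hK₀ : ∀ s s', 0 ≤ K s s')
    (hK₁ : ∀ s, ∑ s', K s s' = 1) (hγ₀ : 0 ≤ γ) (hγ₁ : γ < 1) : 0 ≤ d :=
  nonneg_of_eq_add_smul_vecMul hK₀ hK₁ hγ₀ hγ₁
    (smul_nonneg (sub_nonneg.2 hγ₁.le) (Pi.single_nonneg.2 zero_le_one)) hd

end Visitation

section Bellman

variable {S A : Type*} [Fintype A]

variable (P : S → A → A → S → ℝ) (r : S → A → A → ℝ) (γ τ : ℝ) (π₁ π₂ : S → A → ℝ) in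
noncomputable def regBellman [Fintype S] (V : S → ℝ) (s : S) : ℝ :=
  ∑ a, π₁ s a * ∑ b, π₂ s b * (r s a b + τ * log (π₂ s b) + γ * ∑ s', P s a b s' * V s')

variable (P : S → A → A → S → ℝ) (π₁ π₂ : S → A → ℝ) in
def stateKernel : Matrix S S ℝ := of fun s s' => ∑ a, π₁ s a * ∑ b, π₂ s b * P s a b s'

variable {P : S → A → A → S → ℝ} {r : S → A → A → ℝ} {γ τ : ℝ} {π₁ π₂ : S → A → ℝ}

theorem stateKernel_nonneg (hP : ∀ s a b s', 0 ≤ P s a b s') (hπ₁ : ∀ s a, 0 ≤ π₁ s a)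
    (hπ₂ : ∀ s b, 0 ≤ π₂ s b) (s s' : S) : 0 ≤ stateKernel P π₁ π₂ s s' :=
  sum_nonneg fun a _ => mul_nonneg (hπ₁ s a) <|
    sum_nonneg fun b _ => mul_nonneg (hπ₂ s b) (hP s a b s')

theorem sum_stateKernel [Fintype S] (hP : ∀ s a b, ∑ s', P s a b s' = 1)
    (hπ₁ : ∀ s, ∑ a, π₁ s a = 1) (hπ₂ : ∀ s, ∑ b, π₂ s b = 1) (s : S) :
    ∑ s', stateKernel P π₁ π₂ s s' = 1 := by
  simp only [stateKernel, of_apply]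
  rw [sum_comm]
  simp only [← mul_sum, sum_comm (γ := S), hP, mul_one, hπ₂, hπ₁]

theorem stateKernel_mulVec [Fintype S] (f : S → ℝ) (s : S) :
    (stateKernel P π₁ π₂ *ᵥ f) s = ∑ a, π₁ s a * ∑ b, π₂ s b * ∑ s', P s a b s' * f s' := by
  simp only [mulVec, dotProduct, stateKernel, of_apply, sum_mul, mul_sum, mul_assoc]
  rw [sum_comm]
  exact sum_congr rfl fun a _ => sum_comm

theorem regBellman_sub [Fintype S] (V W : S → ℝ) :
    regBellman P r γ τ π₁ π₂ V - regBellman P r γ τ π₁ π₂ W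
      = γ • stateKernel P π₁ π₂ *ᵥ (V - W) := by
  ext s
  simp only [regBellman, Pi.sub_apply, Pi.smul_apply, stateKernel_mulVec, smul_eq_mul,
    ← sum_sub_distrib, ← mul_sub, mul_sum (univ : Finset A)]
  refine sum_congr rfl fun a _ => sum_congr rfl fun b _ => ?_
  rw [add_sub_add_left_eq_sub, ← mul_sub, ← sum_sub_distrib]
  simp only [mul_sub]
  ring

theorem regBellman_apply [Fintype S] {s : S} (hπ₁ : ∑ a, π₁ s a = 1) (V : S → ℝ) :
    regBellman P r γ τ π₁ π₂ V s
      = ∑ b, π₂ s b * (∑ a, π₁ s a * (r s a b + γ * ∑ s', P s a b s' * V s')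
        + τ * log (π₂ s b)) := by
  simp only [regBellman, mul_sum (univ : Finset A)]
  rw [sum_comm]
  refine sum_congr rfl fun b _ => ?_
  rw [mul_add, mul_sum, ← mul_one (π₂ s b * (τ * log (π₂ s b))), ← hπ₁, mul_sum,
    ← sum_add_distrib]
  exact sum_congr rfl fun a _ => by ring

theorem regBellman_npg_step_sub [Fintype S] {π₂' : S → A → ℝ} {c Z : ℝ} {s : S} {V : S → ℝ}
    (hc : c ≠ 0) (hπ₁ : ∑ a, π₁ s a = 1) (hπ₂ : ∀ b, 0 < π₂ s b) (hπ₂₁ : ∑ b, π₂ s b = 1)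
    (hπ₂' : ∀ b, 0 < π₂' s b) (hπ₂'₁ : ∑ b, π₂' s b = 1) (hZ : 0 < Z)
    (hupd : ∀ b, π₂' s b = π₂ s b ^ (1 - c * τ) *
      exp (-c * ∑ a, π₁ s a * (r s a b + γ * ∑ s', P s a b s' * V s')) / Z) :
    regBellman P r γ τ π₁ π₂' V s - regBellman P r γ τ π₁ π₂ V s
      = -((1 / c - τ) * klDivergence (π₂' s) (π₂ s) + 1 / c * klDivergence (π₂ s) (π₂' s)) := by
  rw [regBellman_apply hπ₁, regBellman_apply hπ₁]
  exact npg_step_sub hc hπ₂ hπ₂₁ hπ₂' hπ₂'₁ hZ hupd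

theorem IsDiscountedVisitation.performance_difference [Fintype S] [DecidableEq S]
    {π₂' : S → A → ℝ} {V V' d : S → ℝ} {s₀ : S}
    (hd : IsDiscountedVisitation (stateKernel P π₁ π₂') γ s₀ d)
    (hV' : regBellman P r γ τ π₁ π₂' V' = V') :
    d ⬝ᵥ (regBellman P r γ τ π₁ π₂' V - V) = (1 - γ) * (V' s₀ - V s₀) := by
  refine hd.dotProduct_eq (f := V' - V) ?_
  have hsub := regBellman_sub (P := P) (r := r) (γ := γ) (τ := τ) (π₁ := π₁) (π₂ := π₂') V' V
  rw [hV'] at hsub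
  rw [← hsub]
  abel

end Bellman

theorem stmt13_general {S A : Type*} [Fintype S] [Fintype A] [DecidableEq S]
    (P : S → A → A → S → ℝ) (r : S → A → A → ℝ) (γ τ η : ℝ)
    (hγ : γ ∈ Set.Ico (0 : ℝ) 1) (hη : 0 < η)
    (hstep : η * τ / (1 - γ) ≤ 1)
    (hP0 : ∀ s a b s', 0 ≤ P s a b s') (hP1 : ∀ s a b, ∑ s', P s a b s' = 1)
    (π1 : S → A → ℝ) (hπ1 : ∀ s, (∀ a, 0 ≤ π1 s a) ∧ ∑ a, π1 s a = 1)
    (π2t π2t1 : S → A → ℝ)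
    (hπ2t : ∀ s, (∀ b, 0 < π2t s b) ∧ ∑ b, π2t s b = 1)
    (hπ2t1 : ∀ s, (∀ b, 0 < π2t1 s b) ∧ ∑ b, π2t1 s b = 1)
    (Vτ : (S → A → ℝ) → S → ℝ)
    (hVτ : ∀ π2 : S → A → ℝ, (∀ s, (∀ b, 0 < π2 s b) ∧ ∑ b, π2 s b = 1) → ∀ s,
      Vτ π2 s = ∑ a, π1 s a * ∑ b, π2 s b *
        (r s a b + τ * Real.log (π2 s b) + γ * ∑ s', P s a b s' * Vτ π2 s'))
    (Qτ : (S → A → ℝ) → S → A → A → ℝ)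
    (hQτ : ∀ π2 s a b, Qτ π2 s a b = r s a b + γ * ∑ s', P s a b s' * Vτ π2 s')
    (Z : S → ℝ) (hZ : ∀ s, 0 < Z s)
    (hupd : ∀ s b, π2t1 s b =
      π2t s b ^ (1 - η * τ / (1 - γ)) *
        Real.exp (-(η / (1 - γ)) * ∑ a, π1 s a * Qτ π2t s a b) / Z s)
    (d : S → S → ℝ)
    (hd : ∀ s0 s', d s0 s' = (1 - γ) * (if s' = s0 then 1 else 0)
      + γ * ∑ s, d s0 s * ∑ a, π1 s a * ∑ b, π2t1 s b * P s a b s')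
    (KL : (A → ℝ) → (A → ℝ) → ℝ)
    (hKL : ∀ p q, KL p q = ∑ b, p b * Real.log (p b / q b)) :
    (∀ s0, Vτ π2t s0 = Vτ π2t1 s0 + ∑ s, d s0 s *
      ((1 / η - τ / (1 - γ)) * KL (π2t1 s) (π2t s) + (1 / η) * KL (π2t s) (π2t1 s))) ∧
    ∀ s0, Vτ π2t1 s0 ≤ Vτ π2t s0 := by
  obtain ⟨hγ₀, hγ₁⟩ := hγ
  have h1γ : 0 < 1 - γ := sub_pos.2 hγ₁
  obtain rfl : KL = klDivergence := funext fun p => funext fun q => hKL p q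
  have hV : ∀ π2, (∀ s, (∀ b, 0 < π2 s b) ∧ ∑ b, π2 s b = 1) →
      regBellman P r γ τ π1 π2 (Vτ π2) = Vτ π2 := fun π2 h => (funext (hVτ π2 h)).symm
  have hvis : ∀ s₀, IsDiscountedVisitation (stateKernel P π1 π2t1) γ s₀ (d s₀) :=
    fun s₀ => funext fun s' => by
      rw [hd s₀ s']
      simp [stateKernel, vecMul, dotProduct, Pi.single_apply]
  set G : S → ℝ := fun s => (1 / η - τ / (1 - γ)) * klDivergence (π2t1 s) (π2t s)
    + 1 / η * klDivergence (π2t s) (π2t1 s)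
  have hupd' : ∀ s b, π2t1 s b = π2t s b ^ (1 - η / (1 - γ) * τ) *
      exp (-(η / (1 - γ)) * ∑ a, π1 s a * (r s a b + γ * ∑ s', P s a b s' * Vτ π2t s')) / Z s :=
    fun s b => by simp only [hupd s b, div_mul_eq_mul_div, hQτ]
  have hadv : regBellman P r γ τ π1 π2t1 (Vτ π2t) - Vτ π2t = -((1 - γ) • G) := funext fun s => by
    have h := regBellman_npg_step_sub (div_pos hη h1γ).ne' (hπ1 s).2 (hπ2t s).1 (hπ2t s).2
      (hπ2t1 s).1 (hπ2t1 s).2 (hZ s) (hupd' s)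
    rw [hV π2t hπ2t] at h
    rw [Pi.sub_apply, h]
    simp only [G, Pi.neg_apply, Pi.smul_apply, smul_eq_mul]
    field_simp
  have hdiff : ∀ s₀, Vτ π2t s₀ = Vτ π2t1 s₀ + d s₀ ⬝ᵥ G := fun s₀ => by
    have h := (hvis s₀).performance_difference (V := Vτ π2t) (hV π2t1 hπ2t1)
    rw [hadv, dotProduct_neg, dotProduct_smul, smul_eq_mul] at h
    refine mul_left_cancel₀ h1γ.ne' ?_
    linarith
  refine ⟨hdiff, fun s₀ => ?_⟩
  have hd₀ : 0 ≤ d s₀ := (hvis s₀).nonneg (stateKernel_nonneg hP0 (fun s => (hπ1 s).1)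
    (fun s b => ((hπ2t1 s).1 b).le)) (sum_stateKernel hP1 (fun s => (hπ1 s).2)
    (fun s => (hπ2t1 s).2)) hγ₀ hγ₁
  have hcoef : 0 ≤ 1 / η - τ / (1 - γ) := by
    rw [div_le_one h1γ] at hstep
    rw [sub_nonneg, div_le_div_iff₀ h1γ hη]
    linarith
  have hG : 0 ≤ G := fun s => add_nonneg
    (mul_nonneg hcoef <| klDivergence_nonneg (hπ2t1 s).1 (hπ2t s).1
      ((hπ2t s).2.trans (hπ2t1 s).2.symm).le)
    (mul_nonneg (by positivity) <| klDivergence_nonneg (hπ2t s).1 (hπ2t1 s).1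
      ((hπ2t1 s).2.trans (hπ2t s).2.symm).le)
  linarith [hdiff s₀, dotProduct_nonneg_of_nonneg hd₀ hG]

/-- entropy-regularized NPG performance improvement. -/
theorem stmt13 {S A : Type*} [Fintype S] [Fintype A] [DecidableEq S]
    [Nonempty S] [Nonempty A]
    (P : S → A → A → S → ℝ) (r : S → A → A → ℝ) (γ τ η : ℝ)
    (hγ : γ ∈ Set.Ico (0 : ℝ) 1) (hτ : 0 < τ) (hη : 0 < η)
    (hstep : η * τ / (1 - γ) ≤ 1)
    (hP0 : ∀ s a b s', 0 ≤ P s a b s') (hP1 : ∀ s a b, ∑ s', P s a b s' = 1)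
    (π1 : S → A → ℝ) (hπ1 : ∀ s, (∀ a, 0 ≤ π1 s a) ∧ ∑ a, π1 s a = 1)
    (π2t π2t1 : S → A → ℝ)
    (hπ2t : ∀ s, (∀ b, 0 < π2t s b) ∧ ∑ b, π2t s b = 1)
    (hπ2t1 : ∀ s, (∀ b, 0 < π2t1 s b) ∧ ∑ b, π2t1 s b = 1)
    (Vτ : (S → A → ℝ) → S → ℝ)
    (hVτ : ∀ π2 : S → A → ℝ, (∀ s, (∀ b, 0 < π2 s b) ∧ ∑ b, π2 s b = 1) → ∀ s,
      Vτ π2 s = ∑ a, π1 s a * ∑ b, π2 s b *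
        (r s a b + τ * Real.log (π2 s b) + γ * ∑ s', P s a b s' * Vτ π2 s'))
    (Qτ : (S → A → ℝ) → S → A → A → ℝ)
    (hQτ : ∀ π2 s a b, Qτ π2 s a b = r s a b + γ * ∑ s', P s a b s' * Vτ π2 s')
    (Z : S → ℝ) (hZ : ∀ s, 0 < Z s)
    (hupd : ∀ s b, π2t1 s b =
      π2t s b ^ (1 - η * τ / (1 - γ)) *
        Real.exp (-(η / (1 - γ)) * ∑ a, π1 s a * Qτ π2t s a b) / Z s)
    (d : S → S → ℝ)
    (hd : ∀ s0 s', d s0 s' = (1 - γ) * (if s' = s0 then 1 else 0)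
      + γ * ∑ s, d s0 s * ∑ a, π1 s a * ∑ b, π2t1 s b * P s a b s')
    (KL : (A → ℝ) → (A → ℝ) → ℝ)
    (hKL : ∀ p q, KL p q = ∑ b, p b * Real.log (p b / q b)) :
    (∀ s0, Vτ π2t s0 = Vτ π2t1 s0 + ∑ s, d s0 s *
      ((1 / η - τ / (1 - γ)) * KL (π2t1 s) (π2t s) + (1 / η) * KL (π2t s) (π2t1 s))) ∧
    ∀ s0, Vτ π2t1 s0 ≤ Vτ π2t s0 :=
  stmt13_general P r γ τ η hγ hη hstep hP0 hP1 π1 hπ1 π2t π2t1 hπ2t hπ2t1 Vτ hVτ Qτ hQτ Z hZ hupd d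
    hd KL hKL
end
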